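/- Let (c_{k,n})_{k≥0} be the approximated Chebyshev coefficients of f using n quadrature points, extended by the aliasing anti-symmetry c_{n+j,n} = −c_{n−j,n} and c_{n,n} = 0. Fix n_q ≥ 1 and j with 0 ≤ j ≤ n−n_q−1. Let A_{n_p,n_q} be the n_q×(n_q+1) Toeplitz matrix with entries c_{i−k,n} for i = n_p+1,…,n_p+n_q and k = 0,…,n_q. Then A_{n+j,n_q} = −R_{n_q} A_{n−j−1,n_q} R_{n_q+1}, where R_m denotes the m×m flip matrix. -/

import Mathlib

/-!
Entry `(i, k)` of `A_{n+j}` is `c (n + d)` with `d = j + 1 + i - k`. Conjugating by the flips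
reverses both indices, which turns the corresponding entry of `A_{n-j-1}` into `c (n - d)`; since
`|d| < n`, the anti-symmetry of `c` about `n` (extended to `d ≤ 0` by `c n = 0`) relates the two.
-/

/-- The `m × m` flip (anti-identity) matrix: ones on the anti-diagonal. -/
def flipMatrix (m : ℕ) : Matrix (Fin m) (Fin m) ℝ :=
  Matrix.of fun i j => if (i : ℕ) + (j : ℕ) = m - 1 then 1 else 0

theorem flipMatrix_eq_one_submatrix_rev (m : ℕ) :
    flipMatrix m = (1 : Matrix (Fin m) (Fin m) ℝ).submatrix id Fin.rev := by
  ext i j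
  simp only [flipMatrix, Matrix.of_apply, Matrix.submatrix_apply, id, Matrix.one_apply,
    Fin.ext_iff, Fin.val_rev]
  congr 1
  apply propext
  omega

theorem flipMatrix_mul {k : Type*} {m : ℕ} (M : Matrix (Fin m) k ℝ) :
    flipMatrix m * M = M.submatrix Fin.rev id := by
  rw [flipMatrix_eq_one_submatrix_rev]
  exact Matrix.one_submatrix_mul id Fin.revPerm M

theorem mul_flipMatrix {l : Type*} {m : ℕ} (M : Matrix l (Fin m) ℝ) :
    M * flipMatrix m = M.submatrix id Fin.rev := by
  rw [flipMatrix_eq_one_submatrix_rev]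
  exact Matrix.mul_submatrix_one (Equiv.refl _) Fin.rev M

theorem apply_add_eq_neg_apply_sub {β : Type*} [AddGroup β] {c : ℤ → β} {a N : ℤ}
    (hanti : ∀ i : ℤ, 1 ≤ i → i ≤ N → c (a + i) = -c (a - i)) (hzero : c a = 0)
    {d : ℤ} (hd : |d| ≤ N) : c (a + d) = -c (a - d) := by
  rcases lt_trichotomy d 0 with hneg | rfl | hpos
  · have := hanti (-d) (by omega) (by rw [abs_of_neg hneg] at hd; exact hd)
    rw [sub_neg_eq_add, ← sub_eq_add_neg] at this
    rw [this, neg_neg]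
  · simp [hzero]
  · exact hanti d hpos (by rwa [abs_of_pos hpos] at hd)

theorem toeplitz_flip_relation_general
    (n nq : ℕ) (j : ℕ) (hj : j + nq + 1 ≤ n)
    (c : ℤ → ℝ)
    -- aliasing anti-symmetry of the approximated coefficients
    (hanti : ∀ i : ℤ, 1 ≤ i → i ≤ 2 * n → c ((n : ℤ) + i) = - c ((n : ℤ) - i))
    (hzero : c (n : ℤ) = 0)
    (A : ℤ → Matrix (Fin nq) (Fin (nq + 1)) ℝ)
    (hA : ∀ np : ℤ, A np = Matrix.of fun (i : Fin nq) (k : Fin (nq + 1)) => c (np + 1 + ((i : ℕ) : ℤ) - ((k : ℕ) : ℤ))) :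
    A ((n : ℤ) + j) = - (flipMatrix nq * A ((n : ℤ) - j - 1) * flipMatrix (nq + 1)) := by
  ext i k
  rw [flipMatrix_mul, mul_flipMatrix, hA, hA]
  simp only [Matrix.neg_apply, Matrix.submatrix_apply, Matrix.of_apply, id, Fin.val_rev]
  have hi := i.isLt
  have hk := k.isLt
  have hflip := apply_add_eq_neg_apply_sub hanti hzero
    (d := j + 1 + i - k) (abs_le.2 ⟨by omega, by omega⟩)
  convert hflip using 2 <;> congr 1 <;> omega

/-- Flip relation between the Toeplitz matrices built from aliased Chebyshev coefficients:
`A_{n+j,n_q} = −R_{n_q} A_{n−j−1,n_q} R_{n_q+1}`. -/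
theorem toeplitz_flip_relation
    (n nq : ℕ) (hnq : 1 ≤ nq) (j : ℕ) (hj : j + nq + 1 ≤ n)
    (c : ℤ → ℝ)
    -- aliasing anti-symmetry of the approximated coefficients
    (hanti : ∀ i : ℤ, 1 ≤ i → i ≤ 2 * n → c ((n : ℤ) + i) = - c ((n : ℤ) - i))
    (hzero : c (n : ℤ) = 0)
    (A : ℤ → Matrix (Fin nq) (Fin (nq + 1)) ℝ)
    (hA : ∀ np : ℤ, A np = Matrix.of fun (i : Fin nq) (k : Fin (nq + 1)) => c (np + 1 + ((i : ℕ) : ℤ) - ((k : ℕ) : ℤ))) :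
    A ((n : ℤ) + j) = - (flipMatrix nq * A ((n : ℤ) - j - 1) * flipMatrix (nq + 1)) :=
  toeplitz_flip_relation_general n nq j hj c hanti hzero A hA
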